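/- For all real numbers t < T, σ > 0 and r > 0, one has r ∫_t^T e^{−r(u−t)} N(σ√(u−t)) du = 1/2 − e^{−r(T−t)} N(σ√(T−t)) + (σ/√(2r+σ²)) · (N(√((2r+σ²)(T−t))) − 1/2). -/

import Mathlib

/-! With `c = 2r + σ²` and `s = u - t`, the function
`s ↦ σ/√c · N(√c √s) - e^{-rs} N(σ√s)` is a primitive of `r e^{-rs} N(σ√s)` on `s > 0`:
the two density terms in its derivative cancel because
`e^{-rs} n(σ√s) = n(√c √s)`, completing the square in the Gaussian exponent.
The identity is the fundamental theorem of calculus on `[0, T - t]`, with `N(0) = 1/2`. -/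

open MeasureTheory Real Set Filter

/-- Standard normal cdf `N(x)`. -/
noncomputable def stdCdf (x : ℝ) : ℝ := ∫ y in Set.Iic x, Real.exp (-y ^ 2 / 2) / Real.sqrt (2 * Real.pi)

noncomputable def stdPdf (y : ℝ) : ℝ := exp (-y ^ 2 / 2) / √(2 * π)

lemma stdCdf_eq_integral_stdPdf (x : ℝ) : stdCdf x = ∫ y in Iic x, stdPdf y := rfl

lemma stdPdf_eq_exp_neg_mul_sq (y : ℝ) : stdPdf y = exp (-(1 / 2) * y ^ 2) / √(2 * π) := by
  rw [stdPdf]; ring_nf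

@[fun_prop] lemma continuous_stdPdf : Continuous stdPdf := by
  unfold stdPdf; fun_prop

lemma integrable_stdPdf : Integrable stdPdf := by
  rw [funext stdPdf_eq_exp_neg_mul_sq]
  exact (integrable_exp_neg_mul_sq (by norm_num)).div_const _

lemma stdCdf_zero : stdCdf 0 = 1 / 2 := by
  have h : ∫ y in Ioi (0:ℝ), exp (-(1 / 2) * y ^ 2) = √(2 * π) / 2 := by
    rw [integral_gaussian_Ioi]; norm_num [div_div_eq_mul_div, mul_comm]
  rw [stdCdf_eq_integral_stdPdf, ← neg_zero, ← integral_comp_neg_Ioi]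
  simp only [stdPdf_eq_exp_neg_mul_sq, neg_sq, integral_div, h]
  field_simp

lemma stdPdf_mul_exp (a b : ℝ) : stdPdf a * exp (-(b ^ 2 - a ^ 2) / 2) = stdPdf b := by
  rw [stdPdf, stdPdf, div_mul_eq_mul_div, ← exp_add]; ring_nf

lemma stdCdf_eq_add_integral (x : ℝ) : stdCdf x = stdCdf 0 + ∫ y in (0:ℝ)..x, stdPdf y :=
  eq_add_of_sub_eq' <| intervalIntegral.integral_Iic_sub_Iic
    integrable_stdPdf.integrableOn integrable_stdPdf.integrableOn

lemma hasDerivAt_stdCdf (x : ℝ) : HasDerivAt stdCdf (stdPdf x) x := by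
  rw [funext stdCdf_eq_add_integral]
  exact (intervalIntegral.integral_hasDerivAt_right integrable_stdPdf.intervalIntegrable
    (continuous_stdPdf.stronglyMeasurableAtFilter _ _) continuous_stdPdf.continuousAt).const_add _

@[fun_prop] lemma continuous_stdCdf : Continuous stdCdf :=
  continuous_iff_continuousAt.2 fun x => (hasDerivAt_stdCdf x).continuousAt

lemma hasDerivAt_stdCdf_mul_sqrt (k : ℝ) {s : ℝ} (hs : 0 < s) :
    HasDerivAt (fun s => stdCdf (k * √s)) (stdPdf (k * √s) * k / (2 * √s)) s :=
  ((hasDerivAt_stdCdf _).comp s ((hasDerivAt_sqrt hs.ne').const_mul k)).congr_deriv (by ring)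

lemma hasDerivAt_primitive_exp_mul_stdCdf_mul_sqrt {r σ s : ℝ} (hc : 0 < 2 * r + σ ^ 2)
    (hs : 0 < s) :
    HasDerivAt (fun s => σ / √(2 * r + σ ^ 2) * stdCdf (√(2 * r + σ ^ 2) * √s)
        - exp (-r * s) * stdCdf (σ * √s))
      (r * (exp (-r * s) * stdCdf (σ * √s))) s := by
  set c := 2 * r + σ ^ 2
  have hexp : HasDerivAt (fun s => exp (-r * s)) (exp (-r * s) * -r) s :=
    ((hasDerivAt_id s).const_mul (-r)).exp.congr_deriv (by simp)
  have hpdf : stdPdf (σ * √s) * exp (-r * s) = stdPdf (√c * √s) := by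
    rw [← stdPdf_mul_exp (σ * √s) (√c * √s)]
    congr 2
    rw [mul_pow, mul_pow, sq_sqrt hc.le, sq_sqrt hs.le]; ring
  have hsc : √c ≠ 0 := (sqrt_pos.2 hc).ne'
  have hss : √s ≠ 0 := (sqrt_pos.2 hs).ne'
  refine (((hasDerivAt_stdCdf_mul_sqrt √c hs).const_mul (σ / √c)).sub
    (hexp.mul (hasDerivAt_stdCdf_mul_sqrt σ hs))).congr_deriv ?_
  rw [← hpdf]
  field_simp
  ring

lemma integral_exp_mul_stdCdf_mul_sqrt {r σ τ : ℝ} (hc : 0 < 2 * r + σ ^ 2) (hτ : 0 ≤ τ) :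
    r * ∫ s in (0:ℝ)..τ, exp (-r * s) * stdCdf (σ * √s)
      = 1 / 2 - exp (-r * τ) * stdCdf (σ * √τ)
        + σ / √(2 * r + σ ^ 2) * (stdCdf (√(2 * r + σ ^ 2) * √τ) - 1 / 2) := by
  rw [← intervalIntegral.integral_const_mul,
    intervalIntegral.integral_eq_sub_of_hasDerivAt_of_le hτ (by fun_prop)
      (fun s hs => hasDerivAt_primitive_exp_mul_stdCdf_mul_sqrt hc hs.1)
      (Continuous.intervalIntegrable (by fun_prop) _ _)]
  simp only [sqrt_zero, mul_zero, exp_zero, stdCdf_zero]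
  ring

theorem discounted_cdf_integral_identity'_general (t T σ r : ℝ) (htT : t < T) (hr : 0 < r) :
    r * ∫ u in t..T, Real.exp (-r * (u - t)) * stdCdf (σ * Real.sqrt (u - t))
      = 1 / 2 - Real.exp (-r * (T - t)) * stdCdf (σ * Real.sqrt (T - t))
        + σ / Real.sqrt (2 * r + σ ^ 2) *
          (stdCdf (Real.sqrt ((2 * r + σ ^ 2) * (T - t))) - 1 / 2) := by
  have hc : 0 < 2 * r + σ ^ 2 := by positivity
  rw [intervalIntegral.integral_comp_sub_right (fun s => exp (-r * s) * stdCdf (σ * √s)), sub_self,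
    integral_exp_mul_stdCdf_mul_sqrt hc (sub_pos.2 htT).le, sqrt_mul hc.le]

theorem discounted_cdf_integral_identity' (t T σ r : ℝ) (htT : t < T) (hσ : 0 < σ) (hr : 0 < r) :
    r * ∫ u in t..T, Real.exp (-r * (u - t)) * stdCdf (σ * Real.sqrt (u - t))
      = 1 / 2 - Real.exp (-r * (T - t)) * stdCdf (σ * Real.sqrt (T - t))
        + σ / Real.sqrt (2 * r + σ ^ 2) *
          (stdCdf (Real.sqrt ((2 * r + σ ^ 2) * (T - t))) - 1 / 2) :=
  discounted_cdf_integral_identity'_general t T σ r htT hr
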